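/- arXiv:0905.1370 — 2 statements merged into one kernel-verified Lean document; each statement's English description precedes it below -/
import Mathlib

section
/- Let (V₀, ω₀), (V₁, ω₁), (V₂, ω₂) be symplectic vector spaces, Λ₀₁ ⊆ V₀ × V₁ a Lagrangian subspace for (−ω₀) ⊕ ω₁, and Λ₁₂ ⊆ V₁ × V₂ a Lagrangian subspace for (−ω₁) ⊕ ω₂. Then the dimension of the kernel of π₀₂ restricted to the fiber product Λ₀₁ ×_{V₁} Λ₁₂ equals the codimension of (Λ₀₁ × Λ₁₂) + K in V₀ × V₁ × V₁ × V₂, i.e. dim ker(π₀₂|_{Λ₀₁ ×_{V₁} Λ₁₂}) = dim(V₀ × V₁ × V₁ × V₂) − dim((Λ₀₁ × Λ₁₂) + K). -/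
open LinearMap Submodule

/-- The symplectic complement of a subspace `W` with respect to a bilinear form `ω`. -/
def symplComp {V : Type*} [AddCommGroup V] [Module ℝ V]
    (ω : V →ₗ[ℝ] V →ₗ[ℝ] ℝ) (W : Submodule ℝ V) : Submodule ℝ V where
  carrier := {v | ∀ w ∈ W, ω v w = 0}
  zero_mem' := by intro w _; simp
  add_mem' := by intro a b ha hb w hw; simp [ha w hw, hb w hw]
  smul_mem' := by intro c a ha w hw; simp [ha w hw]

/-- `ω` is a (linear) symplectic form: alternating and nondegenerate. -/
structure IsSymplecticForm {V : Type*} [AddCommGroup V] [Module ℝ V]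
    (ω : V →ₗ[ℝ] V →ₗ[ℝ] ℝ) : Prop where
  alternating : ∀ v, ω v v = 0
  nondeg : ∀ v, (∀ w, ω v w = 0) → v = 0

/-- A subspace is Lagrangian iff it equals its symplectic complement. -/
def IsLagrangian {V : Type*} [AddCommGroup V] [Module ℝ V]
    (ω : V →ₗ[ℝ] V →ₗ[ℝ] ℝ) (Λ : Submodule ℝ V) : Prop :=
  Λ = symplComp ω Λ

/-- The symplectic form `(−ω₀) ⊕ ω₁` on `V₀ × V₁`. -/
def prodFormNegPos {V₀ V₁ : Type*} [AddCommGroup V₀] [Module ℝ V₀]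
    [AddCommGroup V₁] [Module ℝ V₁]
    (ω₀ : V₀ →ₗ[ℝ] V₀ →ₗ[ℝ] ℝ) (ω₁ : V₁ →ₗ[ℝ] V₁ →ₗ[ℝ] ℝ) :
    (V₀ × V₁) →ₗ[ℝ] (V₀ × V₁) →ₗ[ℝ] ℝ :=
  LinearMap.mk₂ ℝ (fun x y => - ω₀ x.1 y.1 + ω₁ x.2 y.2)
    (by intro x x' y
        simp only [Prod.fst_add, Prod.snd_add, map_add, LinearMap.add_apply]; ring)
    (by intro c x y
        simp only [Prod.smul_fst, Prod.smul_snd, map_smul, LinearMap.smul_apply,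
          smul_eq_mul]; ring)
    (by intro x y y'
        simp only [Prod.fst_add, Prod.snd_add, map_add, LinearMap.add_apply]; ring)
    (by intro c x y
        simp only [Prod.smul_fst, Prod.smul_snd, map_smul, LinearMap.smul_apply,
          smul_eq_mul]; ring)

/-- The symplectic form `ω₀₁₁₂ = (−ω₀) ⊕ ω₁ ⊕ (−ω₁) ⊕ ω₂` on `(V₀ × V₁) × (V₁ × V₂)`. -/
def form0112 {V₀ V₁ V₂ : Type*} [AddCommGroup V₀] [Module ℝ V₀]
    [AddCommGroup V₁] [Module ℝ V₁] [AddCommGroup V₂] [Module ℝ V₂]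
    (ω₀ : V₀ →ₗ[ℝ] V₀ →ₗ[ℝ] ℝ) (ω₁ : V₁ →ₗ[ℝ] V₁ →ₗ[ℝ] ℝ)
    (ω₂ : V₂ →ₗ[ℝ] V₂ →ₗ[ℝ] ℝ) :
    ((V₀ × V₁) × (V₁ × V₂)) →ₗ[ℝ] ((V₀ × V₁) × (V₁ × V₂)) →ₗ[ℝ] ℝ :=
  LinearMap.mk₂ ℝ
    (fun x y => - ω₀ x.1.1 y.1.1 + ω₁ x.1.2 y.1.2 - ω₁ x.2.1 y.2.1 + ω₂ x.2.2 y.2.2)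
    (by intro x x' y
        simp only [Prod.fst_add, Prod.snd_add, map_add, LinearMap.add_apply]; ring)
    (by intro c x y
        simp only [Prod.smul_fst, Prod.smul_snd, map_smul, LinearMap.smul_apply,
          smul_eq_mul]; ring)
    (by intro x y y'
        simp only [Prod.fst_add, Prod.snd_add, map_add, LinearMap.add_apply]; ring)
    (by intro c x y
        simp only [Prod.smul_fst, Prod.smul_snd, map_smul, LinearMap.smul_apply,
          smul_eq_mul]; ring)

/-- `K = V₀ × Δ₁ × V₂`, the product of the full spaces with the diagonal of `V₁`. -/
def Kdiag {V₀ V₁ V₂ : Type*} [AddCommGroup V₀] [Module ℝ V₀]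
    [AddCommGroup V₁] [Module ℝ V₁] [AddCommGroup V₂] [Module ℝ V₂] :
    Submodule ℝ ((V₀ × V₁) × (V₁ × V₂)) where
  carrier := {x | x.1.2 = x.2.1}
  zero_mem' := rfl
  add_mem' := by
    intro a b ha hb
    simp only [Set.mem_setOf_eq] at ha hb ⊢
    show a.1.2 + b.1.2 = a.2.1 + b.2.1
    rw [ha, hb]
  smul_mem' := by
    intro c a ha
    simp only [Set.mem_setOf_eq] at ha ⊢
    show c • a.1.2 = c • a.2.1
    rw [ha]

/-- The projection `π₀₂ : V₀ × V₁ × V₁ × V₂ → V₀ × V₂` onto the outer factors. -/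
def proj02 {V₀ V₁ V₂ : Type*} [AddCommGroup V₀] [Module ℝ V₀]
    [AddCommGroup V₁] [Module ℝ V₁] [AddCommGroup V₂] [Module ℝ V₂] :
    ((V₀ × V₁) × (V₁ × V₂)) →ₗ[ℝ] V₀ × V₂ where
  toFun x := (x.1.1, x.2.2)
  map_add' _ _ := rfl
  map_smul' _ _ := rfl

/-
For a nondegenerate form, `W ↦ W^ω` turns sums into intersections and
`dim W^ω = dim V - dim W`. In `V₀ × V₁ × V₁ × V₂` the product `Λ₀₁ × Λ₁₂` is Lagrangian and
`K^ω = K ∩ ker π₀₂`, so `(Λ₀₁ × Λ₁₂ + K)^ω = (Λ₀₁ × Λ₁₂) ∩ K ∩ ker π₀₂`.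
-/

section SymplecticComplement

variable {V : Type*} [AddCommGroup V] [Module ℝ V]

theorem symplComp_eq_comap_dualAnnihilator (ω : V →ₗ[ℝ] V →ₗ[ℝ] ℝ) (W : Submodule ℝ V) :
    symplComp ω W = W.dualAnnihilator.comap ω := by
  ext v
  simp only [mem_comap, mem_dualAnnihilator]
  rfl

theorem symplComp_sup (ω : V →ₗ[ℝ] V →ₗ[ℝ] ℝ) (W W' : Submodule ℝ V) :
    symplComp ω (W ⊔ W') = symplComp ω W ⊓ symplComp ω W' := by
  simp only [symplComp_eq_comap_dualAnnihilator, dualAnnihilator_sup_eq, comap_inf]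

theorem finrank_symplComp [FiniteDimensional ℝ V] {ω : V →ₗ[ℝ] V →ₗ[ℝ] ℝ}
    (hω : ω.SeparatingLeft) (W : Submodule ℝ V) :
    Module.finrank ℝ (symplComp ω W) = Module.finrank ℝ V - Module.finrank ℝ W := by
  have hinj : Function.Injective ω :=
    LinearMap.ker_eq_bot.mp (separatingLeft_iff_ker_eq_bot.mp hω)
  let e := ω.linearEquivOfInjective hinj Subspace.dual_finrank_eq.symm
  have hdim : Module.finrank ℝ (symplComp ω W) = Module.finrank ℝ W.dualAnnihilator := by
    rw [symplComp_eq_comap_dualAnnihilator, show ω = (e : V →ₗ[ℝ] Module.Dual ℝ V) from rfl,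
      comap_equiv_eq_map_symm, LinearEquiv.finrank_map_eq]
  have := Subspace.finrank_add_finrank_dualAnnihilator_eq W
  omega

end SymplecticComplement

section FourFoldProduct

variable {V₀ V₁ V₂ : Type*} [AddCommGroup V₀] [Module ℝ V₀]
    [AddCommGroup V₁] [Module ℝ V₁] [AddCommGroup V₂] [Module ℝ V₂]
    {ω₀ : V₀ →ₗ[ℝ] V₀ →ₗ[ℝ] ℝ} {ω₁ : V₁ →ₗ[ℝ] V₁ →ₗ[ℝ] ℝ} {ω₂ : V₂ →ₗ[ℝ] V₂ →ₗ[ℝ] ℝ}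

@[simp]
theorem prodFormNegPos_apply (x y : V₀ × V₁) :
    prodFormNegPos ω₀ ω₁ x y = -ω₀ x.1 y.1 + ω₁ x.2 y.2 :=
  rfl

@[simp]
theorem form0112_apply (x y : (V₀ × V₁) × (V₁ × V₂)) :
    form0112 ω₀ ω₁ ω₂ x y
      = -ω₀ x.1.1 y.1.1 + ω₁ x.1.2 y.1.2 - ω₁ x.2.1 y.2.1 + ω₂ x.2.2 y.2.2 :=
  rfl

theorem form0112_apply_eq_add (x y : (V₀ × V₁) × (V₁ × V₂)) :
    form0112 ω₀ ω₁ ω₂ x y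
      = prodFormNegPos ω₀ ω₁ x.1 y.1 + prodFormNegPos ω₁ ω₂ x.2 y.2 := by
  simp only [form0112_apply, prodFormNegPos_apply]
  ring

theorem separatingLeft_form0112 (hω₀ : ω₀.SeparatingLeft) (hω₁ : ω₁.SeparatingLeft)
    (hω₂ : ω₂.SeparatingLeft) : (form0112 ω₀ ω₁ ω₂).SeparatingLeft := by
  intro v hv
  have h₀ : v.1.1 = 0 := hω₀ _ fun a => by simpa using hv ((a, 0), (0, 0))
  have h₁ : v.1.2 = 0 := hω₁ _ fun b => by simpa using hv ((0, b), (0, 0))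
  have h₂ : v.2.1 = 0 := hω₁ _ fun c => by simpa using hv ((0, 0), (c, 0))
  have h₃ : v.2.2 = 0 := hω₂ _ fun d => by simpa using hv ((0, 0), (0, d))
  exact Prod.ext (Prod.ext h₀ h₁) (Prod.ext h₂ h₃)

theorem symplComp_prod (A : Submodule ℝ (V₀ × V₁)) (B : Submodule ℝ (V₁ × V₂)) :
    symplComp (form0112 ω₀ ω₁ ω₂) (A.prod B)
      = (symplComp (prodFormNegPos ω₀ ω₁) A).prod (symplComp (prodFormNegPos ω₁ ω₂) B) := by
  ext v
  simp only [mem_prod]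
  constructor
  · intro hv
    refine ⟨fun a ha => ?_, fun b hb => ?_⟩
    · simpa [form0112_apply_eq_add] using hv (a, 0) ⟨ha, zero_mem B⟩
    · simpa [form0112_apply_eq_add] using hv (0, b) ⟨zero_mem A, hb⟩
  · rintro ⟨hv₁, hv₂⟩ w ⟨hw₁, hw₂⟩
    rw [form0112_apply_eq_add, hv₁ w.1 hw₁, hv₂ w.2 hw₂, add_zero]

theorem symplComp_Kdiag (hω₀ : ω₀.SeparatingLeft) (hω₁ : ω₁.SeparatingLeft)
    (hω₂ : ω₂.SeparatingLeft) :
    symplComp (form0112 ω₀ ω₁ ω₂) Kdiag = Kdiag ⊓ LinearMap.ker proj02 := by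
  ext v
  simp only [mem_inf, LinearMap.mem_ker]
  constructor
  · intro hv
    have h₀ : v.1.1 = 0 := hω₀ _ fun a => by simpa using hv ((a, 0), (0, 0)) rfl
    have h₃ : v.2.2 = 0 := hω₂ _ fun d => by simpa using hv ((0, 0), (0, d)) rfl
    have h₁₂ : v.1.2 - v.2.1 = 0 :=
      hω₁ _ fun b => by simpa [sub_eq_zero] using hv ((0, b), (b, 0)) rfl
    exact ⟨sub_eq_zero.mp h₁₂, Prod.ext h₀ h₃⟩
  · rintro ⟨hvK, hvπ⟩ w hwK
    have h₀ : v.1.1 = 0 := congrArg Prod.fst hvπ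
    have h₃ : v.2.2 = 0 := congrArg Prod.snd hvπ
    have hvK : v.1.2 = v.2.1 := hvK
    have hwK : w.1.2 = w.2.1 := hwK
    simp [h₀, h₃, hvK, hwK]

end FourFoldProduct

theorem statement3 {V₀ V₁ V₂ : Type*}
    [AddCommGroup V₀] [Module ℝ V₀] [FiniteDimensional ℝ V₀]
    [AddCommGroup V₁] [Module ℝ V₁] [FiniteDimensional ℝ V₁]
    [AddCommGroup V₂] [Module ℝ V₂] [FiniteDimensional ℝ V₂]
    (ω₀ : V₀ →ₗ[ℝ] V₀ →ₗ[ℝ] ℝ) (ω₁ : V₁ →ₗ[ℝ] V₁ →ₗ[ℝ] ℝ) (ω₂ : V₂ →ₗ[ℝ] V₂ →ₗ[ℝ] ℝ)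
    (hω₀ : IsSymplecticForm ω₀) (hω₁ : IsSymplecticForm ω₁) (hω₂ : IsSymplecticForm ω₂)
    (Λ₀₁ : Submodule ℝ (V₀ × V₁)) (Λ₁₂ : Submodule ℝ (V₁ × V₂))
    (hΛ₀₁ : IsLagrangian (prodFormNegPos ω₀ ω₁) Λ₀₁)
    (hΛ₁₂ : IsLagrangian (prodFormNegPos ω₁ ω₂) Λ₁₂) :
    Module.finrank ℝ ↥((Λ₀₁.prod Λ₁₂ ⊓ Kdiag) ⊓ LinearMap.ker proj02)
      = Module.finrank ℝ ((V₀ × V₁) × (V₁ × V₂))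
          - Module.finrank ℝ ↥(Λ₀₁.prod Λ₁₂ ⊔ Kdiag) := by
  have hcomp : (Λ₀₁.prod Λ₁₂ ⊓ Kdiag) ⊓ LinearMap.ker proj02
      = symplComp (form0112 ω₀ ω₁ ω₂) (Λ₀₁.prod Λ₁₂ ⊔ Kdiag) := by
    rw [symplComp_sup, symplComp_prod, ← hΛ₀₁, ← hΛ₁₂,
      symplComp_Kdiag hω₀.nondeg hω₁.nondeg hω₂.nondeg, inf_assoc]
  rw [hcomp, finrank_symplComp (separatingLeft_form0112 hω₀.nondeg hω₁.nondeg hω₂.nondeg)]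
end

section
/- Let (V₀, ω₀), (V₁, ω₁), (V₂, ω₂) be symplectic vector spaces, Λ₀₁ ⊆ V₀ × V₁ a Lagrangian subspace for (−ω₀) ⊕ ω₁, and Λ₁₂ ⊆ V₁ × V₂ a Lagrangian subspace for (−ω₁) ⊕ ω₂, and assume the transversality condition (Λ₀₁ × Λ₁₂) + K = V₀ × V₁ × V₁ × V₂. Then the fiber product Λ₀₁ ×_{V₁} Λ₁₂ has dimension (dim V₀ + dim V₂)/2, the projection π₀₂ restricts to a linear isomorphism from Λ₀₁ ×_{V₁} Λ₁₂ onto the geometric composition Λ₀₁ ∘ Λ₁₂, and Λ₀₁ ∘ Λ₁₂ is a Lagrangian subspace of (V₀ × V₂, (−ω₀) ⊕ ω₂). -/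
open LinearMap Submodule

section Aux

variable {V : Type*} [AddCommGroup V] [Module ℝ V]

lemma mem_symplComp {ω : V →ₗ[ℝ] V →ₗ[ℝ] ℝ} {W : Submodule ℝ V} {v : V} :
    v ∈ symplComp ω W ↔ ∀ w ∈ W, ω v w = 0 := Iff.rfl

/-- For a nondegenerate form, `dim W^ω + dim W = dim V`. -/
lemma symplComp_finrank [FiniteDimensional ℝ V] {ω : V →ₗ[ℝ] V →ₗ[ℝ] ℝ}
    (hnd : ∀ v, (∀ w, ω v w = 0) → v = 0) (W : Submodule ℝ V) :
    Module.finrank ℝ (symplComp ω W) + Module.finrank ℝ W = Module.finrank ℝ V := by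
  classical
  set f : V →ₗ[ℝ] Module.Dual ℝ W := W.dualRestrict.comp ω with hf
  have hker : LinearMap.ker f = symplComp ω W := by
    ext v
    simp only [LinearMap.mem_ker, hf, LinearMap.comp_apply, mem_symplComp]
    constructor
    · intro h w hw
      have h2 := congrArg (fun g => g ⟨w, hw⟩) h
      simpa [Submodule.dualRestrict_apply] using h2
    · intro h
      ext ⟨w, hw⟩
      simpa [Submodule.dualRestrict_apply] using h w hw
  have hωinj : Function.Injective (ω : V →ₗ[ℝ] Module.Dual ℝ V) := by
    rw [← LinearMap.ker_eq_bot, Submodule.eq_bot_iff]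
    intro v hv
    exact hnd v (fun w => by
      have h3 : ω v = 0 := hv
      simp [h3])
  have hωsurj : Function.Surjective (ω : V →ₗ[ℝ] Module.Dual ℝ V) :=
    (LinearMap.injective_iff_surjective_of_finrank_eq_finrank
      (Subspace.dual_finrank_eq).symm).mp hωinj
  have hfsurj : Function.Surjective f :=
    (Subspace.dualRestrict_surjective (W := W)).comp hωsurj
  have hrank := LinearMap.finrank_range_add_finrank_ker f
  rw [LinearMap.range_eq_top.mpr hfsurj, hker, finrank_top,
    Subspace.dual_finrank_eq] at hrank
  omega

/-- A Lagrangian subspace of a nondegenerate form has half dimension. -/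
lemma IsLagrangian.two_finrank [FiniteDimensional ℝ V] {ω : V →ₗ[ℝ] V →ₗ[ℝ] ℝ}
    (hnd : ∀ v, (∀ w, ω v w = 0) → v = 0) {Λ : Submodule ℝ V}
    (hΛ : IsLagrangian ω Λ) : 2 * Module.finrank ℝ Λ = Module.finrank ℝ V := by
  have h := symplComp_finrank hnd Λ
  rw [← hΛ] at h
  omega

lemma IsSymplecticForm.prod_nondeg {V₀ V₁ : Type*} [AddCommGroup V₀] [Module ℝ V₀]
    [AddCommGroup V₁] [Module ℝ V₁] {ω₀ : V₀ →ₗ[ℝ] V₀ →ₗ[ℝ] ℝ}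
    {ω₁ : V₁ →ₗ[ℝ] V₁ →ₗ[ℝ] ℝ} (h₀ : IsSymplecticForm ω₀) (h₁ : IsSymplecticForm ω₁) :
    ∀ v, (∀ w, prodFormNegPos ω₀ ω₁ v w = 0) → v = 0 := by
  intro v hv
  have ha : v.1 = 0 := by
    apply h₀.nondeg
    intro w
    have := hv (w, 0)
    simp only [prodFormNegPos, LinearMap.mk₂_apply, map_zero, LinearMap.zero_apply] at this
    linarith
  have hb : v.2 = 0 := by
    apply h₁.nondeg
    intro w
    have := hv (0, w)
    simp only [prodFormNegPos, LinearMap.mk₂_apply, map_zero, LinearMap.zero_apply] at this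
    linarith
  exact Prod.ext ha hb

lemma form0112_apply_s5 {V₀ V₁ V₂ : Type*} [AddCommGroup V₀] [Module ℝ V₀]
    [AddCommGroup V₁] [Module ℝ V₁] [AddCommGroup V₂] [Module ℝ V₂]
    (ω₀ : V₀ →ₗ[ℝ] V₀ →ₗ[ℝ] ℝ) (ω₁ : V₁ →ₗ[ℝ] V₁ →ₗ[ℝ] ℝ)
    (ω₂ : V₂ →ₗ[ℝ] V₂ →ₗ[ℝ] ℝ) (x y : (V₀ × V₁) × (V₁ × V₂)) :
    form0112 ω₀ ω₁ ω₂ x y = prodFormNegPos ω₀ ω₁ x.1 y.1 + prodFormNegPos ω₁ ω₂ x.2 y.2 := by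
  simp only [form0112, prodFormNegPos, LinearMap.mk₂_apply]
  ring

end Aux


section Aux2

@[simp] lemma proj02_apply {V₀ V₁ V₂ : Type*} [AddCommGroup V₀] [Module ℝ V₀]
    [AddCommGroup V₁] [Module ℝ V₁] [AddCommGroup V₂] [Module ℝ V₂]
    (x : (V₀ × V₁) × (V₁ × V₂)) : (proj02 x : V₀ × V₂) = (x.1.1, x.2.2) := rfl

lemma finrank_submodule_prod {M N : Type*} [AddCommGroup M] [Module ℝ M]
    [AddCommGroup N] [Module ℝ N] [FiniteDimensional ℝ M] [FiniteDimensional ℝ N]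
    (p : Submodule ℝ M) (q : Submodule ℝ N) :
    Module.finrank ℝ (p.prod q) = Module.finrank ℝ p + Module.finrank ℝ q := by
  have h : LinearMap.range (p.subtype.prodMap q.subtype) = p.prod q := by
    ext x
    simp only [LinearMap.mem_range, Submodule.mem_prod]
    constructor
    · rintro ⟨⟨a, b⟩, rfl⟩; exact ⟨a.2, b.2⟩
    · rintro ⟨ha, hb⟩; exact ⟨(⟨x.1, ha⟩, ⟨x.2, hb⟩), rfl⟩
  have hinj : Function.Injective (p.subtype.prodMap q.subtype) := by
    rw [LinearMap.coe_prodMap]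
    exact (p.injective_subtype).prodMap (q.injective_subtype)
  rw [← h, LinearMap.finrank_range_of_inj hinj, Module.finrank_prod]

lemma finrank_Kdiag {V₀ V₁ V₂ : Type*} [AddCommGroup V₀] [Module ℝ V₀]
    [AddCommGroup V₁] [Module ℝ V₁] [AddCommGroup V₂] [Module ℝ V₂]
    [FiniteDimensional ℝ V₀] [FiniteDimensional ℝ V₁] [FiniteDimensional ℝ V₂] :
    Module.finrank ℝ (Kdiag : Submodule ℝ ((V₀ × V₁) × (V₁ × V₂)))
      = Module.finrank ℝ V₀ + Module.finrank ℝ V₁ + Module.finrank ℝ V₂ := by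
  let g : (V₀ × V₁ × V₂) →ₗ[ℝ] (V₀ × V₁) × (V₁ × V₂) :=
    { toFun := fun x => ((x.1, x.2.1), (x.2.1, x.2.2)),
      map_add' := fun _ _ => rfl, map_smul' := fun _ _ => rfl }
  have hr : LinearMap.range g = Kdiag := by
    ext x
    constructor
    · rintro ⟨y, rfl⟩; rfl
    · intro hx
      have hx' : x.1.2 = x.2.1 := hx
      exact ⟨(x.1.1, x.1.2, x.2.2), Prod.ext rfl (Prod.ext hx' rfl)⟩
  have ginj : Function.Injective g := by
    intro a b h
    have h1 := congrArg (fun z : (V₀ × V₁) × (V₁ × V₂) => z.1.1) h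
    have h2 := congrArg (fun z : (V₀ × V₁) × (V₁ × V₂) => z.1.2) h
    have h3 := congrArg (fun z : (V₀ × V₁) × (V₁ × V₂) => z.2.2) h
    exact Prod.ext h1 (Prod.ext h2 h3)
  rw [← hr, LinearMap.finrank_range_of_inj ginj, Module.finrank_prod, Module.finrank_prod]
  omega

end Aux2


theorem statement5 {V₀ V₁ V₂ : Type*}
    [AddCommGroup V₀] [Module ℝ V₀] [FiniteDimensional ℝ V₀]
    [AddCommGroup V₁] [Module ℝ V₁] [FiniteDimensional ℝ V₁]
    [AddCommGroup V₂] [Module ℝ V₂] [FiniteDimensional ℝ V₂]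
    (ω₀ : V₀ →ₗ[ℝ] V₀ →ₗ[ℝ] ℝ) (ω₁ : V₁ →ₗ[ℝ] V₁ →ₗ[ℝ] ℝ) (ω₂ : V₂ →ₗ[ℝ] V₂ →ₗ[ℝ] ℝ)
    (hω₀ : IsSymplecticForm ω₀) (hω₁ : IsSymplecticForm ω₁) (hω₂ : IsSymplecticForm ω₂)
    (Λ₀₁ : Submodule ℝ (V₀ × V₁)) (Λ₁₂ : Submodule ℝ (V₁ × V₂))
    (hΛ₀₁ : IsLagrangian (prodFormNegPos ω₀ ω₁) Λ₀₁)
    (hΛ₁₂ : IsLagrangian (prodFormNegPos ω₁ ω₂) Λ₁₂)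
    (htrans : Λ₀₁.prod Λ₁₂ ⊔ Kdiag = ⊤) :
    2 * Module.finrank ℝ ↥(Λ₀₁.prod Λ₁₂ ⊓ Kdiag)
        = Module.finrank ℝ V₀ + Module.finrank ℝ V₂ ∧
    Set.InjOn (⇑proj02) ((Λ₀₁.prod Λ₁₂ ⊓ Kdiag : Submodule ℝ ((V₀ × V₁) × (V₁ × V₂))) : Set ((V₀ × V₁) × (V₁ × V₂))) ∧
    (↑(Submodule.map proj02 (Λ₀₁.prod Λ₁₂ ⊓ Kdiag)) : Set (V₀ × V₂))
        = {p : V₀ × V₂ | ∃ v₁ : V₁, (p.1, v₁) ∈ Λ₀₁ ∧ (v₁, p.2) ∈ Λ₁₂} ∧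
    IsLagrangian (prodFormNegPos ω₀ ω₂)
      (Submodule.map proj02 (Λ₀₁.prod Λ₁₂ ⊓ Kdiag)) := by
  classical
  set Ω := form0112 ω₀ ω₁ ω₂ with hΩdef
  set L := Λ₀₁.prod Λ₁₂ with hLdef
  set p := L ⊓ Kdiag with hpdef
  -- nondegeneracy of Ω
  have hΩnd : ∀ v, (∀ w, Ω v w = 0) → v = 0 := by
    intro v hv
    have h1 : v.1.1 = 0 := by
      apply hω₀.nondeg; intro w
      have := hv ((w, 0), (0, 0))
      simp only [hΩdef, form0112, LinearMap.mk₂_apply, map_zero] at this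
      linarith
    have h2 : v.1.2 = 0 := by
      apply hω₁.nondeg; intro w
      have := hv ((0, w), (0, 0))
      simp only [hΩdef, form0112, LinearMap.mk₂_apply, map_zero] at this
      linarith
    have h3 : v.2.1 = 0 := by
      apply hω₁.nondeg; intro w
      have := hv ((0, 0), (w, 0))
      simp only [hΩdef, form0112, LinearMap.mk₂_apply, map_zero] at this
      linarith
    have h4 : v.2.2 = 0 := by
      apply hω₂.nondeg; intro w
      have := hv ((0, 0), (0, w))
      simp only [hΩdef, form0112, LinearMap.mk₂_apply, map_zero] at this
      linarith
    exact Prod.ext (Prod.ext h1 h2) (Prod.ext h3 h4)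
  -- L is isotropic for Ω
  have hLL : ∀ x ∈ L, ∀ y ∈ L, Ω x y = 0 := by
    intro x hx y hy
    rw [hΩdef, form0112_apply_s5]
    have h1 : prodFormNegPos ω₀ ω₁ x.1 y.1 = 0 := by
      have hx1 : x.1 ∈ Λ₀₁ := hx.1
      rw [hΛ₀₁] at hx1
      exact hx1 y.1 hy.1
    have h2 : prodFormNegPos ω₁ ω₂ x.2 y.2 = 0 := by
      have hx2 : x.2 ∈ Λ₁₂ := hx.2
      rw [hΛ₁₂] at hx2
      exact hx2 y.2 hy.2
    rw [h1, h2, add_zero]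
  -- dimensions
  set n₀ := Module.finrank ℝ V₀
  set n₁ := Module.finrank ℝ V₁
  set n₂ := Module.finrank ℝ V₂
  have hd01 : 2 * Module.finrank ℝ Λ₀₁ = n₀ + n₁ := by
    rw [IsLagrangian.two_finrank (hω₀.prod_nondeg hω₁) hΛ₀₁, Module.finrank_prod]
  have hd12 : 2 * Module.finrank ℝ Λ₁₂ = n₁ + n₂ := by
    rw [IsLagrangian.two_finrank (hω₁.prod_nondeg hω₂) hΛ₁₂, Module.finrank_prod]
  have hdL : Module.finrank ℝ L = Module.finrank ℝ Λ₀₁ + Module.finrank ℝ Λ₁₂ :=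
    finrank_submodule_prod Λ₀₁ Λ₁₂
  have hdK : Module.finrank ℝ (Kdiag : Submodule ℝ ((V₀ × V₁) × (V₁ × V₂)))
      = n₀ + n₁ + n₂ := finrank_Kdiag
  have hdT : Module.finrank ℝ ((V₀ × V₁) × (V₁ × V₂)) = n₀ + n₁ + (n₁ + n₂) := by
    rw [Module.finrank_prod, Module.finrank_prod, Module.finrank_prod]
  have hsupinf := Submodule.finrank_sup_add_finrank_inf_eq L Kdiag
  rw [htrans, finrank_top, hdT, hdL, hdK] at hsupinf
  have hdim : 2 * Module.finrank ℝ p = n₀ + n₂ := by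
    rw [hpdef]; omega
  -- injectivity
  have hinj : Set.InjOn (⇑proj02) ((p : Submodule ℝ ((V₀ × V₁) × (V₁ × V₂))) :
      Set ((V₀ × V₁) × (V₁ × V₂))) := by
    intro x hx y hy hxy
    have hx' : x ∈ p := hx
    have hy' : y ∈ p := hy
    have hd : x - y ∈ p := sub_mem hx' hy'
    have e1 : x.1.1 = y.1.1 := congrArg (fun z : V₀ × V₂ => z.1) hxy
    have e2 : x.2.2 = y.2.2 := congrArg (fun z : V₀ × V₂ => z.2) hxy
    have h11 : (x - y).1.1 = 0 := by simp [e1]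
    have h22 : (x - y).2.2 = 0 := by simp [e2]
    have hK : (x - y).1.2 = (x - y).2.1 := hd.2
    have hz : x - y = 0 := by
      apply hΩnd
      intro w
      have hw : w ∈ L ⊔ Kdiag := by rw [htrans]; exact Submodule.mem_top
      obtain ⟨l, hl, k, hk, rfl⟩ := Submodule.mem_sup.mp hw
      rw [map_add]
      have hΩl : Ω (x - y) l = 0 := hLL _ hd.1 l hl
      have hkk : k.1.2 = k.2.1 := hk
      have hΩk : Ω (x - y) k = 0 := by
        simp only [hΩdef, form0112, LinearMap.mk₂_apply, h11, h22, hK, hkk, map_zero,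
          LinearMap.zero_apply]
        ring
      rw [hΩl, hΩk, add_zero]
    exact sub_eq_zero.mp hz
  -- image description
  have himg : (↑(Submodule.map proj02 p) : Set (V₀ × V₂))
      = {q : V₀ × V₂ | ∃ v₁ : V₁, (q.1, v₁) ∈ Λ₀₁ ∧ (v₁, q.2) ∈ Λ₁₂} := by
    ext z
    simp only [SetLike.mem_coe, Submodule.mem_map, Set.mem_setOf_eq]
    constructor
    · rintro ⟨x, hx, rfl⟩
      refine ⟨x.1.2, ?_, ?_⟩
      · exact hx.1.1
      · have hxK : x.1.2 = x.2.1 := hx.2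
        show (x.1.2, x.2.2) ∈ Λ₁₂
        rw [hxK]
        exact hx.1.2
    · rintro ⟨v₁, h1, h2⟩
      exact ⟨((z.1, v₁), (v₁, z.2)), ⟨⟨h1, h2⟩, rfl⟩, rfl⟩
  -- dimension of the image
  have hfr : Module.finrank ℝ (Submodule.map proj02 p) = Module.finrank ℝ p := by
    have hg : LinearMap.range (proj02.comp p.subtype) = Submodule.map proj02 p := by
      rw [LinearMap.range_comp, Submodule.range_subtype]
    have hginj : Function.Injective (proj02.comp p.subtype) := fun a b hab =>
      Subtype.ext (hinj a.2 b.2 hab)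
    rw [← hg, LinearMap.finrank_range_of_inj hginj]
  -- the image is isotropic
  have hsub : Submodule.map proj02 p
      ≤ symplComp (prodFormNegPos ω₀ ω₂) (Submodule.map proj02 p) := by
    intro z hz
    obtain ⟨x, hx, rfl⟩ := hz
    intro w hw
    obtain ⟨y, hy, rfl⟩ := hw
    have hx2 : x.1.2 = x.2.1 := hx.2
    have hy2 : y.1.2 = y.2.1 := hy.2
    have hxy := hLL x hx.1 y hy.1
    rw [hΩdef] at hxy
    simp only [form0112, LinearMap.mk₂_apply, hx2, hy2] at hxy
    simp only [proj02_apply, prodFormNegPos, LinearMap.mk₂_apply]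
    linarith
  have hcf := symplComp_finrank (hω₀.prod_nondeg hω₂) (Submodule.map proj02 p)
  rw [Module.finrank_prod] at hcf
  have heq : IsLagrangian (prodFormNegPos ω₀ ω₂) (Submodule.map proj02 p) :=
    Submodule.eq_of_le_of_finrank_le hsub (by omega)
  exact ⟨hdim, hinj, himg, heq⟩
end
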